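/- arXiv:2101.09027 — 2 statements merged into one kernel-verified Lean document; each statement's English description precedes it below -/
import Mathlib

section
/- Define the Laplace–Robin operator L(g,σ;λ)u = (n+2λ-1)(⟨grad_g σ, grad u⟩ + λρ u) - σ(Δ_g u + λ J u), where 2n J = scal(g) and (n+1)ρ = -Δ_g σ - σ J, and define S(g,σ) = |dσ|_g^2 + 2σρ. Then on the set where σ > 0, for every λ ∈ ℂ and every smooth function u: L(g,σ;λ)u + σ^{λ-1}(Δ_{σ^{-2}g} - λ(n+λ))(σ^{-λ}u) = λ(n+λ)σ^{-1}(S(g,σ)-1)u. -/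
/-! Expanding `Δ(σ^{-λ}u)` and `⟨grad σ, grad(σ^{-λ}u)⟩` by the Leibniz and chain rules gives
`σ^{λ-1} Δ_{σ^{-2}g} σ^{-λ} u = σΔu - (n+2λ-1)⟨grad σ, grad u⟩ - λ(Δσ)u + λ(n+λ)σ^{-1}|dσ|²u`.
Adding `L(g,σ;λ)u` cancels every derivative of `u`, and the remaining zeroth-order terms
`λ(n+2λ-1)ρ - λ(Δσ + σJ) = 2λ(n+λ)ρ` assemble into `λ(n+λ)σ^{-1}(S-1)` because
`(n+1)ρ = -Δσ - σJ`. -/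

/-- Abstract calculus on a commutative `ℂ`-algebra `A` of (complex-valued smooth) functions on a
Riemannian manifold `(X,g)` of dimension `n+1`, together with a positive function `σ` and its
complex powers `pow a = σ^a`:
* `lap` is the Laplacian `Δ_g`, `grad u v = ⟨grad_g u, grad_g v⟩_g` the gradient pairing;
* both satisfy the usual Leibniz rules, and the powers `σ^a` obey the chain rules
  `⟨grad σ^a, grad u⟩ = a σ^{a-1} ⟨grad σ, grad u⟩` and
  `Δ(σ^a) = a σ^{a-1} Δσ + a(a-1) σ^{a-2} |grad σ|²`. -/
structure ConformalCalculus (A : Type*) [CommRing A] [Algebra ℂ A] where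
  lap : A →ₗ[ℂ] A
  grad : A →ₗ[ℂ] A →ₗ[ℂ] A
  grad_symm : ∀ u v, grad u v = grad v u
  grad_leibniz : ∀ u v w, grad (u * v) w = u * grad v w + v * grad u w
  lap_leibniz : ∀ u v, lap (u * v) = u * lap v + v * lap u + 2 * grad u v
  pow : ℂ → A
  pow_zero' : pow 0 = 1
  pow_add' : ∀ a b : ℂ, pow (a + b) = pow a * pow b
  grad_pow : ∀ (a : ℂ) (u : A), grad (pow a) u = a • (pow (a - 1) * grad (pow 1) u)
  lap_pow : ∀ a : ℂ, lap (pow a)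
    = a • (pow (a - 1) * lap (pow 1)) + (a * (a - 1)) • (pow (a - 2) * grad (pow 1) (pow 1))

namespace ConformalCalculus

variable {A : Type*} [CommRing A] [Algebra ℂ A]

/-- The defining function `σ`. -/
def σ (d : ConformalCalculus A) : A := d.pow 1

/-- `(n+1) ρ = -Δ_g σ - σ J`, where `2nJ = scal(g)`. -/
noncomputable def ρ (n : ℕ) (d : ConformalCalculus A) (J : A) : A :=
  (-(((n : ℂ) + 1)⁻¹)) • (d.lap d.σ + d.σ * J)

/-- `S(g,σ) = |dσ|_g² + 2σρ`. -/
noncomputable def S (n : ℕ) (d : ConformalCalculus A) (J : A) : A :=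
  d.grad d.σ d.σ + 2 * d.σ * d.ρ n J

/-- The Laplace–Robin operator
`L(g,σ;λ)u = (n+2λ-1)(⟨grad σ, grad u⟩ + λρu) - σ(Δ_g u + λJu)`. -/
noncomputable def L (n : ℕ) (d : ConformalCalculus A) (J : A) (lam : ℂ) (u : A) : A :=
  ((n : ℂ) + 2 * lam - 1) • (d.grad d.σ u + lam • (d.ρ n J * u))
    - d.σ * (d.lap u + lam • (J * u))

/-- The Laplacian of the conformally rescaled metric `σ^{-2}g`:
`Δ_{σ^{-2}g} u = σ² Δ_g u - (n-1) σ ⟨grad σ, grad u⟩`. -/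
noncomputable def lapConf (n : ℕ) (d : ConformalCalculus A) (u : A) : A :=
  d.σ ^ 2 * d.lap u - ((n : ℂ) - 1) • (d.σ * d.grad d.σ u)

variable (d : ConformalCalculus A)

theorem pow_mul_pow (a b : ℂ) : d.pow a * d.pow b = d.pow (a + b) :=
  (d.pow_add' a b).symm

theorem grad_σ_pow_mul (a : ℂ) (u : A) :
    d.grad d.σ (d.pow a * u)
      = d.pow a * d.grad d.σ u + a • (d.pow (a - 1) * d.grad d.σ d.σ * u) := by
  rw [d.grad_symm, d.grad_leibniz, d.grad_pow, d.grad_symm u]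
  simp only [σ, Algebra.smul_def]
  ring

theorem lap_pow_mul (a : ℂ) (u : A) :
    d.lap (d.pow a * u)
      = d.pow a * d.lap u + (2 * a) • (d.pow (a - 1) * d.grad d.σ u)
        + a • (d.pow (a - 1) * d.lap d.σ * u)
        + (a * (a - 1)) • (d.pow (a - 2) * d.grad d.σ d.σ * u) := by
  rw [d.lap_leibniz, d.lap_pow a, d.grad_pow a]
  simp only [σ, Algebra.smul_def, map_mul, map_ofNat]
  ring

theorem pow_mul_lapConf_pow_neg_mul (n : ℕ) (lam : ℂ) (u : A) :
    d.pow (lam - 1) * d.lapConf n (d.pow (-lam) * u)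
      = d.σ * d.lap u - ((n : ℂ) + 2 * lam - 1) • d.grad d.σ u - lam • (d.lap d.σ * u)
        + (lam * ((n : ℂ) + lam)) • (d.pow (-1) * d.grad d.σ d.σ * u) := by
  have hσσ₀ : d.pow (lam - 1) * (d.σ * (d.σ * d.pow (-lam))) = d.σ := by
    simp only [σ, pow_mul_pow]; ring_nf
  have hσσ₁ : d.pow (lam - 1) * (d.σ * (d.σ * d.pow (-lam - 1))) = 1 := by
    simp only [σ, pow_mul_pow, ← d.pow_zero']; ring_nf
  have hσσ₂ : d.pow (lam - 1) * (d.σ * (d.σ * d.pow (-lam - 2))) = d.pow (-1) := by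
    simp only [σ, pow_mul_pow]; ring_nf
  have hσ₀ : d.pow (lam - 1) * (d.σ * d.pow (-lam)) = 1 := by
    simp only [σ, pow_mul_pow, ← d.pow_zero']; ring_nf
  have hσ₁ : d.pow (lam - 1) * (d.σ * d.pow (-lam - 1)) = d.pow (-1) := by
    simp only [σ, pow_mul_pow]; ring_nf
  rw [lapConf, lap_pow_mul, grad_σ_pow_mul]
  simp only [Algebra.smul_def, map_mul, map_add, map_sub, map_neg, map_one, map_ofNat]
  linear_combination (d.lap u) * hσσ₀
    - algebraMap ℂ A lam * (2 * d.grad d.σ u + d.lap d.σ * u) * hσσ₁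
    + algebraMap ℂ A lam * (algebraMap ℂ A lam + 1) * (d.grad d.σ d.σ * u) * hσσ₂
    - (algebraMap ℂ A n - 1) * d.grad d.σ u * hσ₀
    + (algebraMap ℂ A n - 1) * algebraMap ℂ A lam * (d.grad d.σ d.σ * u) * hσ₁

theorem add_one_smul_ρ (n : ℕ) (J : A) :
    ((n : ℂ) + 1) • d.ρ n J = -(d.lap d.σ + d.σ * J) := by
  rw [ρ, smul_smul, mul_neg, mul_inv_cancel₀ (Nat.cast_add_one_ne_zero n), neg_smul, one_smul]

end ConformalCalculus

open ConformalCalculus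

/-- **conjugation formula.** For every `λ ∈ ℂ` and every smooth `u`, on the set
where `σ > 0`:
`L(g,σ;λ)u + σ^{λ-1}(Δ_{σ^{-2}g} - λ(n+λ))(σ^{-λ}u) = λ(n+λ) σ^{-1} (S(g,σ)-1) u`. -/
theorem conjugation_formula {A : Type*} [CommRing A] [Algebra ℂ A]
    (n : ℕ) (d : ConformalCalculus A) (J : A) (lam : ℂ) (u : A) :
    d.L n J lam u
      + d.pow (lam - 1) *
          (d.lapConf n (d.pow (-lam) * u) - (lam * ((n : ℂ) + lam)) • (d.pow (-lam) * u))
      = (lam * ((n : ℂ) + lam)) • (d.pow (-1) * ((d.S n J - 1) * u)) := by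
  have hρ := d.add_one_smul_ρ n J
  have hσ : d.pow (-1) * d.σ = 1 := by
    simp only [σ, pow_mul_pow, ← d.pow_zero']; ring_nf
  have hpow : d.pow (lam - 1) * d.pow (-lam) = d.pow (-1) := by
    simp only [pow_mul_pow]; ring_nf
  rw [mul_sub, pow_mul_lapConf_pow_neg_mul, mul_smul_comm, ← mul_assoc, hpow, L, S]
  simp only [Algebra.smul_def, map_mul, map_add, map_sub, map_one, map_ofNat] at hρ ⊢
  linear_combination (-algebraMap ℂ A lam * u) * hρ
    - 2 * algebraMap ℂ A lam * (algebraMap ℂ A n + algebraMap ℂ A lam) * d.ρ n J * u * hσ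
end

section
/- Suppose ρ, J, v are smooth functions of s near 0 (valued in smooth functions on M), v(0)=1, a = 1 - 2sρ, and the identity v'/v = (-(n-1)ρ + 2sρ' - sJ)/(1 - 2sρ) holds as formal power series in s. Write v(s) = 1 + Σ_{k≥1} v_k s^k. Then v₁ = -(n-1)ρ(0), and 2v₂ - v₁² = -(n-3)ρ'(0) - J(0) - 2(n-1)ρ(0)². -/
/-!
Comparing the coefficients of `s⁰` and `s¹` on both sides of `v'·(1 - 2sρ) = (cρ + 2sρ' - sJ)·v`
expresses `v₁` and `2v₂` through `v₀`, `v₁`, `ρ(0)`, `ρ'(0)` and `J(0)`; substituting `v₀ = 1`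
and `c = -(n-1)` and eliminating `v₁` gives both identities.
-/

open PowerSeries

namespace PowerSeries

variable {A : Type*} [CommRing A]

theorem constantCoeff_derivative (f : A⟦X⟧) : constantCoeff (derivative A f) = coeff 1 f := by
  simpa using coeff_derivative f 0

section VolumeODE

variable {c : A} {ρ J v : A⟦X⟧}
  (hODE : derivative A v * (1 - 2 * X * ρ) = (C c * ρ + 2 * X * derivative A ρ - X * J) * v)
include hODE

theorem coeff_one_of_volume_ode : coeff 1 v = c * constantCoeff ρ * constantCoeff v := by
  have h := congrArg constantCoeff hODE
  simp only [map_mul, map_sub, map_add, constantCoeff_derivative, constantCoeff_one,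
    constantCoeff_X, constantCoeff_C, mul_zero, zero_mul, sub_zero, add_zero, mul_one] at h
  linear_combination h

theorem two_mul_coeff_two_of_volume_ode :
    2 * coeff 2 v = 2 * constantCoeff ρ * coeff 1 v
      + c * (constantCoeff ρ * coeff 1 v + coeff 1 ρ * constantCoeff v)
      + 2 * coeff 1 ρ * constantCoeff v - constantCoeff J * constantCoeff v := by
  have h := congrArg (coeff 1) hODE
  simp only [mul_assoc, coeff_one_mul, coeff_derivative, map_sub, map_add, map_mul, map_ofNat,
    coeff_one, coeff_succ_X_mul, coeff_C_mul, coeff_zero_eq_constantCoeff,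
    constantCoeff_derivative, constantCoeff_one, constantCoeff_X, constantCoeff_C,
    Nat.reduceAdd, Nat.cast_one, one_ne_zero, ↓reduceIte, zero_mul, mul_zero, sub_zero,
    mul_one, zero_add, zero_sub, add_zero] at h
  linear_combination h

end VolumeODE

end PowerSeries

/-- Suppose `ρ, J, v` are formal power series in `s` (with coefficients in a
commutative ring `A` of functions on `M`), `v(0) = 1`, and the identity
`v'/v = (-(n-1)ρ + 2sρ' - sJ)/(1 - 2sρ)` holds as formal power series, i.e.
`v'·(1 - 2sρ) = (-(n-1)ρ + 2sρ' - sJ)·v`.  Writing `v = 1 + ∑_{k≥1} v_k s^k`, one has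
`v₁ = -(n-1)ρ(0)` and `2v₂ - v₁² = -(n-3)ρ'(0) - J(0) - 2(n-1)ρ(0)²`. -/
theorem renormalized_volume_coefficients_low_order
    {A : Type*} [CommRing A] (n : ℕ)
    (ρ J v : PowerSeries A)
    (hv0 : constantCoeff v = 1)
    (hODE : (derivative A v) * (1 - 2 * X * ρ)
      = (C (-((n : A) - 1)) * ρ + 2 * X * derivative A ρ - X * J) * v) :
    coeff 1 v = -((n : A) - 1) * constantCoeff ρ ∧
    2 * coeff 2 v - (coeff 1 v) ^ 2
      = -((n : A) - 3) * constantCoeff (derivative A ρ)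
        - constantCoeff J - 2 * ((n : A) - 1) * (constantCoeff ρ) ^ 2 := by
  have hv₁ := coeff_one_of_volume_ode hODE
  have hv₂ := two_mul_coeff_two_of_volume_ode hODE
  rw [hv0] at hv₁ hv₂
  refine ⟨by linear_combination hv₁, ?_⟩
  rw [constantCoeff_derivative]
  linear_combination hv₂ + (2 * constantCoeff ρ - coeff 1 v) * hv₁
end
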